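/- Let A and B be finitely generated groups with finite symmetric generating sets S_A and S_B. For every element g = (f,x) of the wreath product A ≀ B, the word length with respect to the standard generating set S_std = S_A ∪ S_B satisfies ‖g‖_{S_std} = Σ_{y ∈ supp(f)} ‖f(y)‖_{S_A} + TS(e_B, x; supp(f)), where supp(f) = {y ∈ B : f(y) ≠ e_A}. -/

import Mathlib

open scoped Classical

/-- The word length of `g` with respect to a generating set `S`: the least `n` such that
`g` is a product of `n` elements of `S`. -/
noncomputable def wordLength {G : Type*} [Group G] (S : Set G) (g : G) : ℕ :=
  sInf {n | ∃ l : List G, (∀ x ∈ l, x ∈ S) ∧ l.length = n ∧ l.prod = g}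

/-- `g` has depth at least `n` with respect to `S`: multiplying `g` by between `1` and `n`
generators of `S` never increases word length. -/
def HasDepthAtLeast {G : Type*} [Group G] (S : Set G) (g : G) (n : ℕ) : Prop :=
  ∀ l : List G, (∀ x ∈ l, x ∈ S) → 1 ≤ l.length → l.length ≤ n →
    wordLength S (g * l.prod) ≤ wordLength S g

/-- `(G, S)` has unbounded depth: for every `n` there is an element of depth at least `n`. -/
def UnboundedDepth {G : Type*} [Group G] (S : Set G) : Prop :=
  ∀ n : ℕ, ∃ g : G, HasDepthAtLeast S g n

/-- `S` is a finite symmetric generating set of `G`. -/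
structure IsSymmGen {G : Type*} [Group G] (S : Set G) : Prop where
  finite : S.Finite
  symm : ∀ s ∈ S, s⁻¹ ∈ S
  closure_eq_top : Subgroup.closure S = ⊤

/-- The Cayley graph of `G` with respect to `S`: an edge between `g` and `g * s` for
each `s ∈ S`. -/
def cayley {G : Type*} [Group G] (S : Set G) : SimpleGraph G :=
  SimpleGraph.fromRel (fun x y => ∃ s ∈ S, y = x * s)

/-- `TS S b b' F`: the minimal number of edges of a walk in the Cayley graph `Cay(G, S)`
from `b` to `b'` that visits every element of `F` (`0` if no such walk exists). -/
noncomputable def TS {G : Type*} [Group G] (S : Set G) (b b' : G) (F : Set G) : ℕ :=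
  sInf {n | ∃ w : (cayley S).Walk b b', (∀ x ∈ F, x ∈ w.support) ∧ w.length = n}

/-- The group of finitely supported functions `B → A`, as a subgroup of the direct
product `B → A`. -/
def FinSuppSubgroup (A B : Type*) [Group A] : Subgroup (B → A) where
  carrier := {f | (Function.mulSupport f).Finite}
  one_mem' := by
    simp [Function.mulSupport_one]
  mul_mem' := by
    intro f g hf hg
    exact Set.Finite.subset (hf.union hg) (Function.mulSupport_mul f g)
  inv_mem' := by
    intro f hf
    simpa [Function.mulSupport_inv] using hf

/-- Left translation by `b ∈ B` on finitely supported functions: `(b · f) x = f (b⁻¹ x)`. -/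
def lampTranslate (A B : Type*) [Group A] [Group B] (b : B) :
    FinSuppSubgroup A B ≃* FinSuppSubgroup A B where
  toFun f := ⟨fun x => (f : B → A) (b⁻¹ * x), by
    have h : Function.mulSupport (fun x => (f : B → A) (b⁻¹ * x)) ⊆
        (fun x : B => b⁻¹ * x) ⁻¹' Function.mulSupport (f : B → A) := fun x hx => hx
    exact Set.Finite.subset
      (Set.Finite.preimage (Set.injOn_of_injective (mul_right_injective b⁻¹)) f.2) h⟩
  invFun f := ⟨fun x => (f : B → A) (b * x), by
    have h : Function.mulSupport (fun x => (f : B → A) (b * x)) ⊆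
        (fun x : B => b * x) ⁻¹' Function.mulSupport (f : B → A) := fun x hx => hx
    exact Set.Finite.subset
      (Set.Finite.preimage (Set.injOn_of_injective (mul_right_injective b)) f.2) h⟩
  left_inv f := Subtype.ext (funext fun x => by simp)
  right_inv f := Subtype.ext (funext fun x => by simp)
  map_mul' f g := rfl

/-- The action of `B` on finitely supported functions `B → A` by left translation. -/
def lampAction (A B : Type*) [Group A] [Group B] :
    B →* MulAut (FinSuppSubgroup A B) where
  toFun := lampTranslate A B
  map_one' := by
    apply MulEquiv.ext
    intro f
    apply Subtype.ext
    funext x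
    show (f : B → A) ((1 : B)⁻¹ * x) = (f : B → A) x
    simp
  map_mul' b c := by
    apply MulEquiv.ext
    intro f
    apply Subtype.ext
    funext x
    show (f : B → A) ((b * c)⁻¹ * x) = (f : B → A) (c⁻¹ * (b⁻¹ * x))
    rw [mul_inv_rev, mul_assoc]

/-- The restricted wreath product `A ≀ B`, i.e. the semidirect product
`(⨁_B A) ⋊ B` where `B` acts by left translation. -/
abbrev Wreath (A B : Type*) [Group A] [Group B] :=
  FinSuppSubgroup A B ⋊[lampAction A B] B

/-- `δ_a`: the finitely supported function sending `1 ∈ B` to `a` and everything else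
to `1 ∈ A`. -/
noncomputable def lampSingle (A B : Type*) [Group A] [Group B] (a : A) :
    FinSuppSubgroup A B :=
  ⟨fun x => if x = (1 : B) then a else 1, by
    apply Set.Finite.subset (Set.finite_singleton (1 : B))
    intro x hx
    simp only [Set.mem_singleton_iff]
    by_contra h
    exact hx (if_neg h)⟩

/-- The standard generating set `S_A ∪ S_B` of the wreath product `A ≀ B`, where
`a ∈ S_A` is identified with `(δ_a, 1)` and `b ∈ S_B` with `(𝟙, b)`. -/
noncomputable def stdGen {A B : Type*} [Group A] [Group B] (SA : Set A) (SB : Set B) :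
    Set (Wreath A B) :=
  ((fun a => SemidirectProduct.inl (lampSingle A B a)) '' SA) ∪
    ((fun b => SemidirectProduct.inr b) '' SB)

lemma finSupp_finite {A B : Type*} [Group A] (f : FinSuppSubgroup A B) :
    (Function.mulSupport (f : B → A)).Finite := f.2

/-!
Write `L (f, x) = ∑_{y ∈ supp f} ‖f y‖ + TS(1, x; supp f)`. A function `L` on a group is the
word length as soon as `L 1 = 0`, right multiplication by a generator raises `L` by at most one,
and every `g ≠ 1` admits a generator `s` with `L (g s⁻¹) < L g`. For the wreath product these are
local checks at the cursor `x`: a lamp generator changes only the lamp at `x`, which every tour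
ending at `x` visits, and a move generator extends a tour by one edge. Conversely, if the lamp at
`x` is lit, shorten it by the last letter of a geodesic word; otherwise `x ∉ supp f`, and dropping
the last edge of an optimal tour shortens it.
-/

section WordLength

variable {G : Type*} [Group G] {S : Set G}

lemma wordLength_le_length {l : List G} (hl : ∀ x ∈ l, x ∈ S) {g : G} (hg : l.prod = g) :
    wordLength S g ≤ l.length :=
  Nat.sInf_le ⟨l, hl, rfl, hg⟩

lemma wordLength_one : wordLength S (1 : G) = 0 :=
  Nat.le_zero.mp (wordLength_le_length (l := []) (by simp) rfl)

lemma IsSymmGen.submonoid_closure_eq_top (hS : IsSymmGen S) : Submonoid.closure S = ⊤ := by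
  have hinv : S⁻¹ ⊆ S := fun s hs => by simpa using hS.symm _ hs
  rw [← Set.union_eq_left.mpr hinv, ← Subgroup.closure_toSubmonoid, hS.closure_eq_top]
  rfl

lemma exists_list_length_eq_wordLength (hS : Submonoid.closure S = ⊤) (g : G) :
    ∃ l : List G, (∀ x ∈ l, x ∈ S) ∧ l.length = wordLength S g ∧ l.prod = g := by
  obtain ⟨l, hl, hg⟩ := Submonoid.exists_list_of_mem_closure (hS ▸ Submonoid.mem_top g)
  have hne : {n | ∃ l : List G, (∀ x ∈ l, x ∈ S) ∧ l.length = n ∧ l.prod = g}.Nonempty :=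
    ⟨l.length, l, hl, rfl, hg⟩
  exact Nat.sInf_mem hne

lemma wordLength_mul_le_succ (hS : Submonoid.closure S = ⊤) {s : G} (hs : s ∈ S) (g : G) :
    wordLength S (g * s) ≤ wordLength S g + 1 := by
  obtain ⟨l, hl, hlen, rfl⟩ := exists_list_length_eq_wordLength hS g
  have := wordLength_le_length (l := l ++ [s]) (g := l.prod * s)
    (by simpa [or_imp, forall_and] using ⟨hl, hs⟩) (by simp)
  simpa [hlen] using this

lemma exists_wordLength_mul_inv_lt (hS : Submonoid.closure S = ⊤) {g : G} (hg : g ≠ 1) :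
    ∃ s ∈ S, wordLength S (g * s⁻¹) < wordLength S g := by
  obtain ⟨l, hl, hlen, rfl⟩ := exists_list_length_eq_wordLength hS g
  obtain rfl | ⟨l', s, rfl⟩ := l.eq_nil_or_concat'
  · exact absurd List.prod_nil hg
  refine ⟨s, hl s (by simp), ?_⟩
  have := wordLength_le_length (S := S) (l := l') (fun x hx => hl x (by simp [hx]))
    (g := (l' ++ [s]).prod * s⁻¹) (by simp)
  simp only [List.length_append, List.length_singleton] at hlen
  omega

section Characterization

variable {L : G → ℕ}

lemma le_length_of_mul_le_succ (h1 : L 1 = 0) (hmul : ∀ g, ∀ s ∈ S, L (g * s) ≤ L g + 1)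
    (l : List G) (hl : ∀ x ∈ l, x ∈ S) : L l.prod ≤ l.length := by
  induction l using List.reverseRecOn with
  | nil => simp [h1]
  | append_singleton l s ih =>
    rw [List.prod_append, List.prod_singleton, List.length_append, List.length_singleton]
    exact (hmul _ s (hl s (by simp))).trans
      (Nat.add_le_add_right (ih fun x hx => hl x (by simp [hx])) 1)

lemma exists_list_length_le_of_exists_lt (hdesc : ∀ g ≠ 1, ∃ s ∈ S, L (g * s⁻¹) < L g)
    (g : G) : ∃ l : List G, (∀ x ∈ l, x ∈ S) ∧ l.length ≤ L g ∧ l.prod = g := by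
  induction hn : L g using Nat.strong_induction_on generalizing g with
  | _ n ih =>
    by_cases hg : g = 1
    · exact ⟨[], by simp, by simp, by simp [hg]⟩
    obtain ⟨s, hs, hlt⟩ := hdesc g hg
    obtain ⟨l, hl, hlen, hprod⟩ := ih _ (hn ▸ hlt) (g * s⁻¹) rfl
    refine ⟨l ++ [s], by simpa [or_imp, forall_and] using ⟨hl, hs⟩, ?_, by simp [hprod]⟩
    simp only [List.length_append, List.length_singleton]
    omega

theorem wordLength_eq_of_mul_le_succ_of_exists_lt (h1 : L 1 = 0)
    (hmul : ∀ g, ∀ s ∈ S, L (g * s) ≤ L g + 1) (hdesc : ∀ g ≠ 1, ∃ s ∈ S, L (g * s⁻¹) < L g)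
    (g : G) : wordLength S g = L g := by
  obtain ⟨l, hl, hlen, rfl⟩ := exists_list_length_le_of_exists_lt hdesc g
  refine le_antisymm ((wordLength_le_length hl rfl).trans hlen) (le_csInf ⟨_, l, hl, rfl, rfl⟩ ?_)
  rintro n ⟨l', hl', rfl, hprod⟩
  exact hprod ▸ le_length_of_mul_le_succ h1 hmul l' hl'

end Characterization

end WordLength

lemma SimpleGraph.Preconnected.exists_walk_forall_mem_support {V : Type*} {G : SimpleGraph V}
    (hG : G.Preconnected) {F : Set V} (hF : F.Finite) (u v : V) :
    ∃ w : G.Walk u v, ∀ y ∈ F, y ∈ w.support := by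
  induction F, hF using Set.Finite.induction_on generalizing u with
  | empty => exact ⟨(hG u v).some, by simp⟩
  | @insert a F _ _ ih =>
    obtain ⟨w, hw⟩ := ih a
    refine ⟨(hG u a).some.append w, ?_⟩
    simp only [Set.mem_insert_iff, forall_eq_or_imp, SimpleGraph.Walk.mem_support_append_iff]
    exact ⟨.inr w.start_mem_support, fun y hy => .inr (hw y hy)⟩

section Cayley

variable {G : Type*} [Group G] {S : Set G}

lemma cayley_adj_mul {g s : G} (hs : s ∈ S) (hne : g ≠ g * s) : (cayley S).Adj g (g * s) :=
  ⟨hne, .inl ⟨s, hs, rfl⟩⟩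

lemma cayley_reachable_mul {s : G} (hs : s ∈ S) (g : G) : (cayley S).Reachable g (g * s) := by
  by_cases hne : g = g * s
  · exact hne ▸ .refl g
  · exact (cayley_adj_mul hs hne).reachable

lemma exists_eq_mul_inv_of_cayley_adj (hS : ∀ s ∈ S, s⁻¹ ∈ S) {u v : G}
    (h : (cayley S).Adj u v) : ∃ s ∈ S, v = u * s⁻¹ := by
  obtain ⟨-, ⟨s, hs, rfl⟩ | ⟨s, hs, rfl⟩⟩ := h
  · exact ⟨s⁻¹, hS s hs, by simp⟩
  · exact ⟨s, hs, by simp⟩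

lemma cayley_preconnected (hS : Subgroup.closure S = ⊤) : (cayley S).Preconnected := by
  have hreach (g : G) : (cayley S).Reachable 1 g := by
    induction hS ▸ Subgroup.mem_top g using Subgroup.closure_induction_right with
    | one => rfl
    | mul_right x _ s hs ih => exact ih.trans (cayley_reachable_mul hs x)
    | mul_inv_cancel x _ s hs ih =>
      exact ih.trans (by simpa using (cayley_reachable_mul hs (x * s⁻¹)).symm)
  exact fun u v => (hreach u).symm.trans (hreach v)

lemma TS_le_length {u v : G} {F : Set G} (w : (cayley S).Walk u v)
    (hw : ∀ y ∈ F, y ∈ w.support) : TS S u v F ≤ w.length :=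
  Nat.sInf_le ⟨w, hw, rfl⟩

lemma exists_walk_length_eq_TS (hS : Subgroup.closure S = ⊤) {F : Set G} (hF : F.Finite)
    (u v : G) : ∃ w : (cayley S).Walk u v, (∀ y ∈ F, y ∈ w.support) ∧ w.length = TS S u v F := by
  obtain ⟨w, hw⟩ := (cayley_preconnected hS).exists_walk_forall_mem_support hF u v
  have hne : {n | ∃ w : (cayley S).Walk u v, (∀ y ∈ F, y ∈ w.support) ∧ w.length = n}.Nonempty :=
    ⟨w.length, w, hw, rfl⟩
  exact Nat.sInf_mem hne

lemma TS_le_of_subset_insert (hS : Subgroup.closure S = ⊤) {F F' : Set G} (hF' : F'.Finite)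
    {u v : G} (h : F ⊆ insert v F') : TS S u v F ≤ TS S u v F' := by
  obtain ⟨w, hw, hlen⟩ := exists_walk_length_eq_TS hS hF' u v
  refine hlen ▸ TS_le_length w fun y hy => ?_
  rcases h hy with rfl | hy
  exacts [w.end_mem_support, hw y hy]

lemma TS_mul_le_succ (hS : Subgroup.closure S = ⊤) {F : Set G} (hF : F.Finite) {s : G}
    (hs : s ∈ S) (u v : G) : TS S u (v * s) F ≤ TS S u v F + 1 := by
  obtain ⟨w, hw, hlen⟩ := exists_walk_length_eq_TS hS hF u v
  by_cases hv : v = v * s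
  · have := TS_le_length (w.copy rfl hv) (by simpa using hw)
    simp only [SimpleGraph.Walk.length_copy] at this
    omega
  · have := TS_le_length (w.concat (cayley_adj_mul hs hv))
      fun y hy => w.support_subset_support_concat _ (hw y hy)
    simp only [SimpleGraph.Walk.length_concat] at this
    omega

lemma exists_TS_mul_inv_lt (hS : IsSymmGen S) {F : Set G} (hF : F.Finite) {u v : G}
    (hvF : v ∉ F) (hne : u ≠ v ∨ F.Nonempty) : ∃ s ∈ S, TS S u (v * s⁻¹) F < TS S u v F := by
  obtain ⟨w, hw, hlen⟩ := exists_walk_length_eq_TS hS.closure_eq_top hF u v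
  have hw_nil : ¬ w.Nil := by
    intro hnil
    obtain rfl := hnil.eq
    rcases hne with h | ⟨y, hy⟩
    · exact h rfl
    · have := hw y hy
      rw [SimpleGraph.Walk.nil_iff_support_eq.mp hnil, List.mem_singleton] at this
      exact hvF (this ▸ hy)
  obtain ⟨s, hs, hsv⟩ :=
    exists_eq_mul_inv_of_cayley_adj hS.symm (w.adj_penultimate hw_nil).symm
  refine ⟨s, hs, hsv ▸ ?_⟩
  have hdrop : TS S u w.penultimate F ≤ w.dropLast.length := by
    refine TS_le_length _ fun y hy => ?_
    have := hw y hy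
    rw [← SimpleGraph.Walk.support_dropLast_concat hw_nil, List.mem_append,
      List.mem_singleton] at this
    exact this.resolve_right fun h => hvF (h ▸ hy)
  have := w.length_dropLast_add_one hw_nil
  omega

end Cayley

lemma Function.mulSupport_subset_insert_of_eq_update {ι M : Type*} [One M] [DecidableEq ι]
    {f f' : ι → M} {x : ι} {a : M} (h : f' = Function.update f x a) :
    Function.mulSupport f' ⊆ insert x (Function.mulSupport f) := by
  intro y hy
  by_cases hyx : y = x
  · exact .inl hyx
  · exact .inr (by rwa [Function.mem_mulSupport, h, Function.update_of_ne hyx] at hy)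

section LampLength

variable {A B : Type*} [Group A] (SA : Set A)

noncomputable def lampLength (f : FinSuppSubgroup A B) : ℕ :=
  ∑ y ∈ (finSupp_finite f).toFinset, wordLength SA ((f : B → A) y)

variable {SA}

lemma lampLength_eq_sum_of_subset (f : FinSuppSubgroup A B) {F : Finset B}
    (hF : Function.mulSupport (f : B → A) ⊆ F) :
    lampLength SA f = ∑ y ∈ F, wordLength SA ((f : B → A) y) := by
  refine Finset.sum_subset (fun y hy => hF ((finSupp_finite f).mem_toFinset.mp hy)) ?_
  intro y _ hy
  rw [Set.Finite.mem_toFinset, Function.notMem_mulSupport] at hy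
  rw [hy, wordLength_one]

lemma lampLength_add_wordLength_of_eq_update [DecidableEq B] (f f' : FinSuppSubgroup A B)
    {x : B} {a : A} (h : (f' : B → A) = Function.update (f : B → A) x a) :
    lampLength SA f' + wordLength SA ((f : B → A) x) = lampLength SA f + wordLength SA a := by
  set F := insert x ((finSupp_finite f).toFinset ∪ (finSupp_finite f').toFinset)
  have hxF : x ∈ F := Finset.mem_insert_self _ _
  rw [lampLength_eq_sum_of_subset f (F := F) (fun y hy => by simp [F, hy]),
    lampLength_eq_sum_of_subset f' (F := F) (fun y hy => by simp [F, hy]),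
    ← Finset.add_sum_erase F _ hxF, ← Finset.add_sum_erase F _ hxF,
    Finset.sum_congr rfl fun y hy => by rw [h, Function.update_of_ne (Finset.ne_of_mem_erase hy)],
    h, Function.update_self]
  ring

end LampLength

section Wreath

variable {A B : Type*} [Group A] [Group B]

lemma lampSingle_inv (a : A) : lampSingle A B a⁻¹ = (lampSingle A B a)⁻¹ := by
  ext y
  change (if y = 1 then a⁻¹ else 1) = (if y = 1 then a else 1)⁻¹
  split_ifs <;> simp

lemma coe_left_mul_inl_lampSingle (g : Wreath A B) (a : A) :
    ((g * SemidirectProduct.inl (lampSingle A B a)).left : B → A) =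
      Function.update (g.left : B → A) g.right ((g.left : B → A) g.right * a) := by
  ext y
  change (g.left : B → A) y * (if g.right⁻¹ * y = 1 then a else 1) = _
  by_cases hy : y = g.right
  · simp [hy]
  · simp [hy, inv_mul_eq_one, Ne.symm hy]

variable (SA : Set A) (SB : Set B)

noncomputable def wreathLength (g : Wreath A B) : ℕ :=
  lampLength SA g.left + TS SB 1 g.right (Function.mulSupport (g.left : B → A))

variable {SA SB}

lemma wreathLength_mul_inl_lampSingle_add (hSB : Subgroup.closure SB = ⊤) (g : Wreath A B)
    (a : A) :
    wreathLength SA SB (g * SemidirectProduct.inl (lampSingle A B a)) +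
        wordLength SA ((g.left : B → A) g.right) ≤
      wreathLength SA SB g + wordLength SA ((g.left : B → A) g.right * a) := by
  have hupd := coe_left_mul_inl_lampSingle g a
  have hlamp := lampLength_add_wordLength_of_eq_update (SA := SA) _ _ hupd
  have hTS := TS_le_of_subset_insert (u := 1) hSB (finSupp_finite g.left)
    (Function.mulSupport_subset_insert_of_eq_update hupd)
  simp only [wreathLength, SemidirectProduct.mul_right, SemidirectProduct.right_inl, mul_one]
    at hTS ⊢
  omega

lemma wreathLength_mul_inr (g : Wreath A B) (b : B) :
    wreathLength SA SB (g * SemidirectProduct.inr b) =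
      lampLength SA g.left + TS SB 1 (g.right * b) (Function.mulSupport (g.left : B → A)) := by
  simp [wreathLength]

lemma wreathLength_one : wreathLength SA SB (1 : Wreath A B) = 0 := by
  have hTS : TS SB (1 : B) 1 ∅ = 0 := Nat.le_zero.mp (TS_le_length .nil (by simp))
  simp [wreathLength, lampLength, hTS]

lemma wreathLength_mul_le_succ (hSA : Submonoid.closure SA = ⊤) (hSB : Subgroup.closure SB = ⊤)
    (g : Wreath A B) :
    ∀ s ∈ stdGen SA SB, wreathLength SA SB (g * s) ≤ wreathLength SA SB g + 1 := by
  rintro _ (⟨a, ha, rfl⟩ | ⟨b, hb, rfl⟩) <;> dsimp only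
  · have := wreathLength_mul_inl_lampSingle_add (SA := SA) hSB g a
    have := wordLength_mul_le_succ hSA ha ((g.left : B → A) g.right)
    omega
  · have := TS_mul_le_succ hSB (finSupp_finite g.left) hb 1 g.right
    rw [wreathLength_mul_inr, wreathLength]
    omega

lemma exists_wreathLength_mul_inv_lt (hSA : IsSymmGen SA) (hSB : IsSymmGen SB)
    {g : Wreath A B} (hg : g ≠ 1) :
    ∃ s ∈ stdGen SA SB, wreathLength SA SB (g * s⁻¹) < wreathLength SA SB g := by
  by_cases hlamp : (g.left : B → A) g.right = 1
  · have hne : 1 ≠ g.right ∨ (Function.mulSupport (g.left : B → A)).Nonempty := by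
      by_contra! h
      refine hg (SemidirectProduct.ext ?_ h.1.symm)
      exact Subtype.ext (Function.mulSupport_eq_empty_iff.mp h.2)
    obtain ⟨b, hb, hlt⟩ :=
      exists_TS_mul_inv_lt hSB (finSupp_finite g.left) (Function.notMem_mulSupport.mpr hlamp) hne
    refine ⟨SemidirectProduct.inr b, .inr ⟨b, hb, rfl⟩, ?_⟩
    rw [← map_inv, wreathLength_mul_inr, wreathLength]
    omega
  · obtain ⟨a, ha, hlt⟩ := exists_wordLength_mul_inv_lt hSA.submonoid_closure_eq_top hlamp
    refine ⟨SemidirectProduct.inl (lampSingle A B a), .inl ⟨a, ha, rfl⟩, ?_⟩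
    have := wreathLength_mul_inl_lampSingle_add (SA := SA) hSB.closure_eq_top g a⁻¹
    rw [← map_inv, ← lampSingle_inv]
    omega

end Wreath

/-- The word length of `g = (f, x) ∈ A ≀ B` with respect to the standard generating set:
the sum of the word lengths of the lamp states plus the length of an optimal traveling
salesperson tour from `1` through `supp f` ending at `x`. -/
theorem wreath_wordLength_eq {A B : Type*} [Group A] [Group B]
    (SA : Set A) (SB : Set B) (hSA : IsSymmGen SA) (hSB : IsSymmGen SB)
    (f : FinSuppSubgroup A B) (x : B) :
    wordLength (stdGen SA SB) (⟨f, x⟩ : Wreath A B) =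
      (∑ y ∈ (finSupp_finite f).toFinset, wordLength SA ((f : B → A) y)) +
        TS SB 1 x (Function.mulSupport (f : B → A)) :=
  wordLength_eq_of_mul_le_succ_of_exists_lt wreathLength_one
    (wreathLength_mul_le_succ hSA.submonoid_closure_eq_top hSB.closure_eq_top)
    (fun _ => exists_wreathLength_mul_inv_lt hSA hSB) _
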